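/- Let u : (εℤ)^d → ℂ be an element of ℓ¹, and define v(ξ) = (2π)^{−d/2} Σ_{y∈(εℤ)^d} e^{i ξ·y/ε} u(y) for ξ ∈ [−π,π]^d. If moreover Δ_ε^N u ∈ ℓ¹ for some N ∈ ℕ, then for all ξ with |ξ| ≥ ε^s (0 < s) one has |v(ξ)| ≤ (π²/(2ε^{2s}))^N (2π)^{−d/2} Σ_{x∈(εℤ)^d} |Δ_ε^N u(x)|, where Δ_ε is the discrete Laplacian Δ_ε u(x) = Σ_ν (u(x+εe_ν) + u(x−εe_ν)) − 2d u(x). -/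

import Mathlib

open Real

/-- The discrete Laplacian on lattice functions `u : ℤ^d → ℂ`. -/
noncomputable def latDiscLap {d : ℕ} (u : (Fin d → ℤ) → ℂ) (x : Fin d → ℤ) : ℂ :=
  (∑ ν, (u (x + Pi.single ν 1) + u (x - Pi.single ν 1))) - 2 * d * u x

/-!
The phase `y ↦ exp(i ξ·y)` is a character of `ℤ^d`, so translating `u` by `a` multiplies its
lattice Fourier transform by `exp(-i ξ·a)`. Hence the Laplacian acts on the transform as
multiplication by `-Σ_ν (2 - 2 cos ξ_ν)`, and `N` applications give
`(Σ_ν (2 - 2 cos ξ_ν))^N |v(ξ)| ≤ Σ_x |Δ^N u(x)|`. On `[-π, π]^d` the symbol is at least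
`(4/π²)|ξ|² ≥ (2/π²) ε^{2s}`.
-/

open Complex in
noncomputable def latticePhase {d : ℕ} (ξ : Fin d → ℝ) (y : Fin d → ℤ) : ℂ :=
  exp (↑(∑ i, ξ i * y i) * I)

noncomputable def latticeFourier {d : ℕ} (ξ : Fin d → ℝ) (w : (Fin d → ℤ) → ℂ) : ℂ :=
  ∑' y, latticePhase ξ y * w y

noncomputable def latDiscLapSymbol {d : ℕ} (ξ : Fin d → ℝ) : ℝ :=
  ∑ ν, (2 - 2 * Real.cos (ξ ν))

section

variable {d : ℕ}

theorem norm_latticePhase (ξ : Fin d → ℝ) (y : Fin d → ℤ) : ‖latticePhase ξ y‖ = 1 :=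
  Complex.norm_exp_ofReal_mul_I _

theorem latticePhase_add (ξ : Fin d → ℝ) (y z : Fin d → ℤ) :
    latticePhase ξ (y + z) = latticePhase ξ y * latticePhase ξ z := by
  simp only [latticePhase, ← Complex.exp_add, Pi.add_apply, Int.cast_add, mul_add,
    Finset.sum_add_distrib, Complex.ofReal_add, add_mul]

theorem latticePhase_neg_mul_self (ξ : Fin d → ℝ) (a : Fin d → ℤ) :
    latticePhase ξ (-a) * latticePhase ξ a = 1 := by
  rw [← latticePhase_add, neg_add_cancel]
  simp [latticePhase]

theorem latticePhase_single (ξ : Fin d → ℝ) (ν : Fin d) (n : ℤ) :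
    latticePhase ξ (Pi.single ν n) = Complex.exp (↑(ξ ν * n) * Complex.I) := by
  simp [latticePhase, Pi.single_apply]

theorem latticePhase_single_add_latticePhase_neg_single (ξ : Fin d → ℝ) (ν : Fin d) :
    latticePhase ξ (Pi.single ν 1) + latticePhase ξ (-Pi.single ν 1) = 2 * Real.cos (ξ ν) := by
  rw [← Pi.single_neg, latticePhase_single, latticePhase_single, Complex.ofReal_cos,
    Complex.two_cos]
  push_cast
  ring_nf

theorem latticeFourier_comp_add_right (ξ : Fin d → ℝ) (w : (Fin d → ℤ) → ℂ) (a : Fin d → ℤ) :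
    latticeFourier ξ (fun y => w (y + a)) = latticePhase ξ (-a) * latticeFourier ξ w := by
  have hshift : ∀ y, latticePhase ξ y * w (y + a)
      = latticePhase ξ (-a) * (latticePhase ξ (y + a) * w (y + a)) := fun y => by
    rw [latticePhase_add, ← mul_assoc, ← mul_assoc, mul_comm (latticePhase ξ (-a)),
      mul_assoc _ (latticePhase ξ (-a)), latticePhase_neg_mul_self, mul_one]
  rw [latticeFourier, tsum_congr hshift, tsum_mul_left]
  exact congrArg _ ((Equiv.addRight a).tsum_eq fun z => latticePhase ξ z * w z)

theorem summable_latticePhase_mul (ξ : Fin d → ℝ) {w : (Fin d → ℤ) → ℂ}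
    (hw : Summable fun x => ‖w x‖) : Summable fun y => latticePhase ξ y * w y :=
  .of_norm (by simpa only [norm_mul, norm_latticePhase, one_mul] using hw)

theorem norm_latticeFourier_le (ξ : Fin d → ℝ) {w : (Fin d → ℤ) → ℂ}
    (hw : Summable fun x => ‖w x‖) : ‖latticeFourier ξ w‖ ≤ ∑' x, ‖w x‖ := by
  simp only [latticeFourier]
  refine (norm_tsum_le_tsum_norm ?_).trans_eq ?_ <;>
    simp only [norm_mul, norm_latticePhase, one_mul, hw]

theorem summable_norm_latDiscLap {w : (Fin d → ℤ) → ℂ} (hw : Summable fun x => ‖w x‖) :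
    Summable fun x => ‖latDiscLap w x‖ := by
  have hshift (a : Fin d → ℤ) : Summable fun x => ‖w (x + a)‖ :=
    hw.comp_injective (add_left_injective a)
  have hbound : Summable fun x =>
      ∑ ν, (‖w (x + Pi.single ν 1)‖ + ‖w (x - Pi.single ν 1)‖) + ‖(2 * d : ℂ)‖ * ‖w x‖ := by
    simp only [sub_eq_add_neg]
    exact (summable_sum fun ν _ => (hshift _).add (hshift _)).add (hw.mul_left _)
  refine hbound.of_nonneg_of_le (fun x => norm_nonneg _) fun x => ?_
  refine (norm_sub_le _ _).trans (add_le_add ?_ (norm_mul_le _ _))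
  exact (norm_sum_le _ _).trans (Finset.sum_le_sum fun ν _ => norm_add_le _ _)

theorem summable_norm_iterate_latDiscLap {w : (Fin d → ℤ) → ℂ} (hw : Summable fun x => ‖w x‖)
    (k : ℕ) : Summable fun x => ‖(latDiscLap^[k] w) x‖ := by
  induction k with
  | zero => exact hw
  | succ k ih => rw [Function.iterate_succ_apply']; exact summable_norm_latDiscLap ih

theorem latticeFourier_latDiscLap (ξ : Fin d → ℝ) {w : (Fin d → ℤ) → ℂ}
    (hw : Summable fun x => ‖w x‖) :
    latticeFourier ξ (latDiscLap w) = -latDiscLapSymbol ξ * latticeFourier ξ w := by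
  have hshift (a : Fin d → ℤ) : Summable fun y => latticePhase ξ y * w (y + a) :=
    summable_latticePhase_mul ξ (hw.comp_injective (add_left_injective a))
  have hpair (ν : Fin d) : Summable fun y => latticePhase ξ y * w (y + Pi.single ν 1)
      + latticePhase ξ y * w (y + -Pi.single ν 1) := (hshift _).add (hshift _)
  have hexpand : ∀ y, latticePhase ξ y * latDiscLap w y
      = ∑ ν, (latticePhase ξ y * w (y + Pi.single ν 1)
          + latticePhase ξ y * w (y + -Pi.single ν 1))
        - 2 * d * (latticePhase ξ y * w y) := fun y => by
    simp only [latDiscLap, sub_eq_add_neg, mul_add, Finset.mul_sum]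
    ring
  rw [latticeFourier, tsum_congr hexpand,
    Summable.tsum_sub (summable_sum fun ν _ => hpair ν)
      ((summable_latticePhase_mul ξ hw).mul_left _),
    Summable.tsum_finsetSum fun ν _ => hpair ν, tsum_mul_left,
    Finset.sum_congr rfl fun ν _ => (hshift _).tsum_add (hshift _)]
  change ∑ ν, (latticeFourier ξ (fun y => w (y + Pi.single ν 1))
      + latticeFourier ξ (fun y => w (y + -Pi.single ν 1))) - _ = _
  have hν (ν : Fin d) : latticeFourier ξ (fun y => w (y + Pi.single ν 1))
      + latticeFourier ξ (fun y => w (y + -Pi.single ν 1))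
      = 2 * Real.cos (ξ ν) * latticeFourier ξ w := by
    rw [latticeFourier_comp_add_right, latticeFourier_comp_add_right, neg_neg, ← add_mul,
      add_comm, latticePhase_single_add_latticePhase_neg_single]
  rw [Finset.sum_congr rfl fun ν _ => hν ν, ← Finset.sum_mul, latDiscLapSymbol]
  push_cast
  simp only [Finset.sum_sub_distrib, Finset.sum_const, Finset.card_univ, Fintype.card_fin,
    nsmul_eq_mul, latticeFourier]
  ring

theorem latticeFourier_iterate_latDiscLap (ξ : Fin d → ℝ) {w : (Fin d → ℤ) → ℂ}
    (hw : Summable fun x => ‖w x‖) (k : ℕ) :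
    latticeFourier ξ (latDiscLap^[k] w) = (-latDiscLapSymbol ξ) ^ k * latticeFourier ξ w := by
  induction k with
  | zero => simp
  | succ k ih =>
    rw [Function.iterate_succ_apply',
      latticeFourier_latDiscLap ξ (summable_norm_iterate_latDiscLap hw k), ih]
    ring

theorem norm_latticeFourier_le_of_latDiscLapSymbol_pos (ξ : Fin d → ℝ)
    (hpos : 0 < latDiscLapSymbol ξ) {w : (Fin d → ℤ) → ℂ} (hw : Summable fun x => ‖w x‖)
    (k : ℕ) :
    ‖latticeFourier ξ w‖ ≤ (latDiscLapSymbol ξ)⁻¹ ^ k * ∑' x, ‖(latDiscLap^[k] w) x‖ := by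
  have h := norm_latticeFourier_le ξ (summable_norm_iterate_latDiscLap hw k)
  rw [latticeFourier_iterate_latDiscLap ξ hw, norm_mul, norm_pow, norm_neg, Complex.norm_real,
    Real.norm_of_nonneg hpos.le] at h
  rw [inv_pow, ← div_eq_inv_mul, le_div_iff₀' (by positivity)]
  exact h

theorem mul_sq_le_latDiscLapSymbol (ξ : Fin d → ℝ) (hbox : ∀ i, |ξ i| ≤ Real.pi) :
    4 / Real.pi ^ 2 * ∑ i, ξ i ^ 2 ≤ latDiscLapSymbol ξ := by
  rw [Finset.mul_sum]
  refine Finset.sum_le_sum fun i _ => ?_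
  have hcos := Real.cos_le_one_sub_mul_cos_sq (hbox i)
  linarith [show 4 / Real.pi ^ 2 * ξ i ^ 2 = 2 * (2 / Real.pi ^ 2 * ξ i ^ 2) by ring]

end

theorem tsum_exp_scaled_mul_eq_latticeFourier {d : ℕ} (ξ : Fin d → ℝ) {ε : ℝ} (hε : ε ≠ 0)
    (w : (Fin d → ℤ) → ℂ) :
    ∑' y : Fin d → ℤ, Complex.exp (Complex.I * (∑ i, ξ i * (ε * y i) : ℝ) / ε) * w y
      = latticeFourier ξ w := by
  refine tsum_congr fun y => congrArg (· * w y) ?_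
  have hscale : ∑ i, ξ i * (ε * y i) = ε * ∑ i, ξ i * y i := by
    rw [Finset.mul_sum]
    exact Finset.sum_congr rfl fun i _ => by ring
  rw [latticePhase, hscale, Complex.ofReal_mul]
  congr 1
  field_simp [Complex.ofReal_ne_zero.2 hε]

theorem discrete_nonstationary_phase_general
    (d N : ℕ) (ε s : ℝ) (hε : 0 < ε)
    (u : (Fin d → ℤ) → ℂ)
    (hu : Summable fun x => ‖u x‖)
    (ξ : Fin d → ℝ)
    (hbox : ∀ i, |ξ i| ≤ Real.pi)
    (hξ : ε ^ s ≤ Real.sqrt (∑ i, ξ i ^ 2)) :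
    ‖((2 * Real.pi) ^ (-(d : ℝ) / 2) : ℝ) *
        ∑' y : Fin d → ℤ, Complex.exp (Complex.I * (∑ i, ξ i * (ε * y i)) / ε) * u y‖
      ≤ (Real.pi ^ 2 / (2 * ε ^ (2 * s))) ^ N * (2 * Real.pi) ^ (-(d : ℝ) / 2) *
          ∑' x : Fin d → ℤ, ‖(latDiscLap^[N] u) x‖ := by
  have hεs : ε ^ (2 * s) ≤ ∑ i, ξ i ^ 2 := by
    rw [mul_comm, Real.rpow_mul hε.le, Real.rpow_two]
    exact (Real.le_sqrt (by positivity) (by positivity)).1 hξ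
  have hεs_pos : 0 < ε ^ (2 * s) := by positivity
  have hsymbol : 2 / Real.pi ^ 2 * ε ^ (2 * s) ≤ latDiscLapSymbol ξ := by
    refine le_trans ?_ (mul_sq_le_latDiscLapSymbol ξ hbox)
    gcongr
    norm_num
  have hsymbol_inv : (latDiscLapSymbol ξ)⁻¹ ≤ Real.pi ^ 2 / (2 * ε ^ (2 * s)) := by
    refine (inv_anti₀ (by positivity) hsymbol).trans_eq ?_
    field_simp
  have hsymbol_pos : 0 < latDiscLapSymbol ξ := (by positivity : (0 : ℝ) < _).trans_le hsymbol
  have hv := norm_latticeFourier_le_of_latDiscLapSymbol_pos ξ hsymbol_pos hu N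
  rw [tsum_exp_scaled_mul_eq_latticeFourier ξ hε.ne', norm_mul, Complex.norm_real,
    Real.norm_of_nonneg (by positivity)]
  calc _ ≤ (2 * Real.pi) ^ (-(d : ℝ) / 2) * ((Real.pi ^ 2 / (2 * ε ^ (2 * s))) ^ N *
          ∑' x : Fin d → ℤ, ‖(latDiscLap^[N] u) x‖) := by
        gcongr
        exact hv.trans (by gcongr)
    _ = _ := by ring

/-- Discrete non-stationary-phase estimate: for `|ξ| ≥ ε^s`, `ξ ∈ [−π,π]^d`, the
lattice Fourier sum `v(ξ) = (2π)^{−d/2} Σ_y e^{iξ·y/ε} u(y)` is bounded by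
`(π²/(2ε^{2s}))^N (2π)^{−d/2} Σ_x |Δ_ε^N u(x)|`. -/
theorem discrete_nonstationary_phase
    (d N : ℕ) (ε s : ℝ) (hε : 0 < ε) (hs : 0 < s)
    (u : (Fin d → ℤ) → ℂ)
    (hu : Summable fun x => ‖u x‖)
    (hΔu : Summable fun x => ‖(latDiscLap^[N] u) x‖)
    (ξ : Fin d → ℝ)
    (hbox : ∀ i, |ξ i| ≤ Real.pi)
    (hξ : ε ^ s ≤ Real.sqrt (∑ i, ξ i ^ 2)) :
    ‖((2 * Real.pi) ^ (-(d : ℝ) / 2) : ℝ) *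
        ∑' y : Fin d → ℤ, Complex.exp (Complex.I * (∑ i, ξ i * (ε * y i)) / ε) * u y‖
      ≤ (Real.pi ^ 2 / (2 * ε ^ (2 * s))) ^ N * (2 * Real.pi) ^ (-(d : ℝ) / 2) *
          ∑' x : Fin d → ℤ, ‖(latDiscLap^[N] u) x‖ :=
  discrete_nonstationary_phase_general d N ε s hε u hu ξ hbox hξ
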